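/- If G is an inter-reduced (reduced) Gröbner basis of an ideal I ⊆ ℚ[x₁,...,xₙ] with all leading coefficients equal to 1, then G is unique: any two reduced Gröbner bases of I with monic elements for the same monomial order are equal as sets. -/

import Mathlib

open MvPolynomial
open scoped MonomialOrder

namespace ModularGB

variable {σ : Type*}

/-- The leading exponent (multidegree) of `f` with respect to the monomial order `m`. -/
noncomputable def mdeg {R : Type*} [CommSemiring R] (m : MonomialOrder σ)
    (f : MvPolynomial σ R) : σ →₀ ℕ :=
  m.toSyn.symm (f.support.sup fun d => m.toSyn d)

/-- The leading coefficient of `f`. -/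
noncomputable def leadCoeff {R : Type*} [CommSemiring R] (m : MonomialOrder σ)
    (f : MvPolynomial σ R) : R :=
  f.coeff (mdeg m f)

/-- The leading term of `f`. -/
noncomputable def leadTerm {R : Type*} [CommSemiring R] (m : MonomialOrder σ)
    (f : MvPolynomial σ R) : MvPolynomial σ R :=
  monomial (mdeg m f) (leadCoeff m f)

/-- `f` reduces to zero upon division by the finite family `G`:
it has a standard representation `f = ∑ qᵢ Gᵢ` with `mdeg (qᵢ Gᵢ) ≼ mdeg f`. -/
def RedZero {R : Type*} [CommSemiring R] (m : MonomialOrder σ) {ι : Type*} [Fintype ι]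
    (G : ι → MvPolynomial σ R) (f : MvPolynomial σ R) : Prop :=
  ∃ q : ι → MvPolynomial σ R,
    f = ∑ i, q i * G i ∧ ∀ i, mdeg m (q i * G i) ≼[m] mdeg m f

/-- The S-polynomial of `f` and `g`. -/
noncomputable def sPoly (m : MonomialOrder σ) {K : Type*} [Field K]
    (f g : MvPolynomial σ K) : MvPolynomial σ K :=
  monomial (mdeg m f ⊔ mdeg m g - mdeg m f) (leadCoeff m f)⁻¹ * f
    - monomial (mdeg m f ⊔ mdeg m g - mdeg m g) (leadCoeff m g)⁻¹ * g

/-- The leading-term ideal of an ideal `I`. -/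
noncomputable def LTIdeal {R : Type*} [CommSemiring R] (m : MonomialOrder σ)
    (I : Ideal (MvPolynomial σ R)) : Ideal (MvPolynomial σ R) :=
  Ideal.span (leadTerm m '' {f | f ∈ I ∧ f ≠ 0})

/-- The family `G` is a Gröbner basis of `I`. -/
def IsGroebner {R : Type*} [CommSemiring R] (m : MonomialOrder σ) {ι : Type*}
    (G : ι → MvPolynomial σ R) (I : Ideal (MvPolynomial σ R)) : Prop :=
  (∀ i, G i ∈ I) ∧ Ideal.span (Set.range fun i => leadTerm m (G i)) = LTIdeal m I

end ModularGB

open ModularGB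

/-- `G` (as a finite set) is a Gröbner basis of `I`. -/
def IsGroebnerSet {σ : Type*} (m : MonomialOrder σ) (G : Finset (MvPolynomial σ ℚ))
    (I : Ideal (MvPolynomial σ ℚ)) : Prop :=
  (↑G ⊆ (I : Set (MvPolynomial σ ℚ))) ∧
    Ideal.span (leadTerm m '' ↑G) = LTIdeal m I

/-- `G` is a reduced Gröbner basis of `I`: every element is monic and no monomial of an
element is divisible by the leading monomial of another element. -/
def IsReducedGroebner {σ : Type*} (m : MonomialOrder σ) (G : Finset (MvPolynomial σ ℚ))
    (I : Ideal (MvPolynomial σ ℚ)) : Prop :=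
  IsGroebnerSet m G I ∧ (∀ g ∈ G, leadCoeff m g = 1) ∧
    ∀ g ∈ G, ∀ g' ∈ G, g' ≠ g → ∀ d ∈ g.support, ¬ mdeg m g' ≤ d


/-!
Let `g₁ ∈ G₁`. Since `G₂` is a Gröbner basis, some `g₂ ∈ G₂` has `mdeg g₂ ∣ mdeg g₁`, and symmetrically
some `g₁' ∈ G₁` has `mdeg g₁' ∣ mdeg g₂ ∣ mdeg g₁`; inter-reducedness of `G₁` forces `g₁' = g₁`, so
`mdeg g₁ = mdeg g₂`. If `g₁ ≠ g₂`, the leading monomial of `g₁ - g₂ ∈ I` is a monomial of `g₁` or of `g₂`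
other than their common leading one (the monic leading terms cancel). It is divisible by the leading
monomial of an element of the basis containing that polynomial, which by inter-reducedness must be the
polynomial itself — impossible for a monomial strictly below its leading one.
-/

namespace ModularGB

variable {σ : Type*} {m : MonomialOrder σ}

theorem mdeg_eq_degree {R : Type*} [CommSemiring R] (f : MvPolynomial σ R) :
    mdeg m f = m.degree f :=
  rfl

theorem leadCoeff_eq_leadingCoeff {R : Type*} [CommSemiring R] (f : MvPolynomial σ R) :
    leadCoeff m f = m.leadingCoeff f :=
  rfl

theorem exists_mdeg_le_of_mem {K : Type*} [Field K] {I : Ideal (MvPolynomial σ K)}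
    {G : Set (MvPolynomial σ K)} (hspan : Ideal.span (leadTerm m '' G) = LTIdeal m I)
    (hmonic : ∀ g ∈ G, leadCoeff m g = 1) {f : MvPolynomial σ K} (hf : f ∈ I) (hf0 : f ≠ 0) :
    ∃ g ∈ G, mdeg m g ≤ mdeg m f := by
  have hlead : leadTerm m '' G = (fun s => monomial s (1 : K)) '' (mdeg m '' G) := by
    rw [Set.image_image]
    exact Set.image_congr fun g hg => by rw [leadTerm, hmonic g hg]
  have hLT : leadTerm m f ∈ Ideal.span (leadTerm m '' G) :=
    hspan ▸ Ideal.subset_span ⟨f, ⟨hf, hf0⟩, rfl⟩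
  have hmono : monomial (mdeg m f) (1 : K) ∈ Ideal.span (leadTerm m '' G) := by
    have hc : leadCoeff m f ≠ 0 := m.leadingCoeff_ne_zero_iff.mpr hf0
    simpa [leadTerm, C_mul_monomial, hc] using Ideal.mul_mem_left _ (C (leadCoeff m f)⁻¹) hLT
  rw [hlead, mem_ideal_span_monomial_image] at hmono
  obtain ⟨_, ⟨g, hg, rfl⟩, hle⟩ := hmono (mdeg m f) (by classical simp)
  exact ⟨g, hg, hle⟩

end ModularGB

namespace IsReducedGroebner

variable {σ : Type*} {m : MonomialOrder σ} {I : Ideal (MvPolynomial σ ℚ)}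
  {G G₁ G₂ : Finset (MvPolynomial σ ℚ)} {g g' f : MvPolynomial σ ℚ}

theorem ne_zero (hG : IsReducedGroebner m G I) (hg : g ∈ G) : g ≠ 0 := by
  rintro rfl
  simpa [leadCoeff_eq_leadingCoeff] using hG.2.1 0 hg

theorem exists_mdeg_le (hG : IsReducedGroebner m G I) (hf : f ∈ I) (hf0 : f ≠ 0) :
    ∃ g ∈ G, mdeg m g ≤ mdeg m f :=
  exists_mdeg_le_of_mem hG.1.2 hG.2.1 hf hf0

theorem eq_of_mdeg_le_of_mem_support (hG : IsReducedGroebner m G I) (hg : g ∈ G) (hg' : g' ∈ G)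
    {d : σ →₀ ℕ} (hd : d ∈ g.support) (hle : mdeg m g' ≤ d) : g' = g :=
  by_contra fun hne => hG.2.2 g hg g' hg' hne d hd hle

theorem mdeg_eq_of_mdeg_mem_support (hG : IsReducedGroebner m G I) (hg : g ∈ G) (hf : f ∈ I)
    (hf0 : f ≠ 0) (hfg : mdeg m f ∈ g.support) : mdeg m f = mdeg m g := by
  obtain ⟨g', hg', hle⟩ := hG.exists_mdeg_le hf hf0
  obtain rfl := hG.eq_of_mdeg_le_of_mem_support hg hg' hfg hle
  exact m.toSyn.injective (le_antisymm (m.le_degree hfg) (m.toSyn_monotone hle))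

theorem eq_of_mdeg_eq (h₁ : IsReducedGroebner m G₁ I) (h₂ : IsReducedGroebner m G₂ I)
    {g₁ g₂ : MvPolynomial σ ℚ} (hg₁ : g₁ ∈ G₁) (hg₂ : g₂ ∈ G₂) (hdeg : mdeg m g₁ = mdeg m g₂) :
    g₁ = g₂ := by
  classical
  by_contra hne
  have hf : g₁ - g₂ ∈ I := I.sub_mem (h₁.1.1 hg₁) (h₂.1.1 hg₂)
  have hf0 : g₁ - g₂ ≠ 0 := sub_ne_zero.mpr hne
  have hcancel : (g₁ - g₂).coeff (mdeg m g₁) = 0 := by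
    have c₁ := h₁.2.1 g₁ hg₁
    have c₂ := h₂.2.1 g₂ hg₂
    rw [leadCoeff, ← hdeg] at c₂
    rw [coeff_sub, ← leadCoeff, c₁, c₂, sub_self]
  have hfdeg : mdeg m (g₁ - g₂) ≠ mdeg m g₁ := fun h =>
    m.coeff_degree_ne_zero_iff.mpr hf0 (by rwa [← mdeg_eq_degree, h])
  rcases Finset.mem_union.mp (support_sub σ g₁ g₂ (m.degree_mem_support hf0)) with h | h
  · exact hfdeg (h₁.mdeg_eq_of_mdeg_mem_support hg₁ hf hf0 h)
  · exact hfdeg ((h₂.mdeg_eq_of_mdeg_mem_support hg₂ hf hf0 h).trans hdeg.symm)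

theorem subset (h₁ : IsReducedGroebner m G₁ I) (h₂ : IsReducedGroebner m G₂ I) : G₁ ⊆ G₂ := by
  intro g₁ hg₁
  have hg₁0 := h₁.ne_zero hg₁
  obtain ⟨g₂, hg₂, hle₂⟩ := h₂.exists_mdeg_le (h₁.1.1 hg₁) hg₁0
  obtain ⟨g₁', hg₁', hle₁⟩ := h₁.exists_mdeg_le (h₂.1.1 hg₂) (h₂.ne_zero hg₂)
  obtain rfl :=
    h₁.eq_of_mdeg_le_of_mem_support hg₁ hg₁' (m.degree_mem_support hg₁0) (hle₁.trans hle₂)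
  rwa [h₁.eq_of_mdeg_eq h₂ hg₁ hg₂ (le_antisymm hle₁ hle₂)]

end IsReducedGroebner

/-- Uniqueness of the reduced (monic, inter-reduced) Gröbner basis. -/
theorem stmt12 {σ : Type*} (m : MonomialOrder σ)
    (I : Ideal (MvPolynomial σ ℚ)) (G₁ G₂ : Finset (MvPolynomial σ ℚ))
    (h₁ : IsReducedGroebner m G₁ I) (h₂ : IsReducedGroebner m G₂ I) :
    G₁ = G₂ :=
  h₁.subset h₂ |>.antisymm (h₂.subset h₁)
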